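/- Every automorphism of the complex algebra T³₀₂(λ) with λ ≠ 0 (nonzero products e₁e₁ = e₂, e₁e₂ = λe₃, e₂e₁ = e₃) is of the form φ(e₁) = x e₁ + y e₂ + z e₃, φ(e₂) = x² e₂ + (λ+1) x y e₃, φ(e₃) = x³ e₃ for some x,y,z ∈ ℂ with x ≠ 0, and every such map is an automorphism. -/
import Mathlib


/-- The 3-dimensional algebra `T³₀₂(λ)` with nonzero products
`e₁e₁ = e₂`, `e₁e₂ = λe₃`, `e₂e₁ = e₃`. -/
def mulT302 (lam : ℂ) (u v : Fin 3 → ℂ) : Fin 3 → ℂ :=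
  ![0, u 0 * v 0, lam * (u 0 * v 1) + u 1 * v 0]

/-- For `λ ≠ 0`, a linear map is an automorphism of `T³₀₂(λ)` iff
`φ(e₁) = x e₁ + y e₂ + z e₃`, `φ(e₂) = x² e₂ + (λ+1) x y e₃`, `φ(e₃) = x³ e₃`
for some `x ≠ 0`, `y`, `z`. -/
theorem T302_automorphisms (lam : ℂ) (hlam : lam ≠ 0)
    (φ : (Fin 3 → ℂ) →ₗ[ℂ] (Fin 3 → ℂ)) :
    (Function.Bijective φ ∧ ∀ u v, φ (mulT302 lam u v) = mulT302 lam (φ u) (φ v)) ↔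
      ∃ x y z : ℂ, x ≠ 0 ∧
        φ ![1, 0, 0] = ![x, y, z] ∧
        φ ![0, 1, 0] = ![0, x ^ 2, (lam + 1) * x * y] ∧
        φ ![0, 0, 1] = ![0, 0, x ^ 3] := by
  constructor
  · rintro ⟨hbij, hmul⟩
    set x := φ ![1, 0, 0] 0 with hx
    set y := φ ![1, 0, 0] 1 with hy
    set z := φ ![1, 0, 0] 2 with hz
    have he1 : φ ![1, 0, 0] = ![x, y, z] := by
      ext i; fin_cases i <;> rfl
    have hm1 : mulT302 lam ![(1:ℂ), 0, 0] ![1, 0, 0] = ![0, 1, 0] := by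
      ext i; fin_cases i <;> simp [mulT302]
    have he2 : φ ![0, 1, 0] = ![0, x ^ 2, (lam + 1) * x * y] := by
      have h := hmul ![1, 0, 0] ![1, 0, 0]
      rw [hm1, he1] at h
      rw [h]
      ext i; fin_cases i <;> simp [mulT302] <;> ring
    have hm2 : mulT302 lam ![(0:ℂ), 1, 0] ![1, 0, 0] = ![0, 0, 1] := by
      ext i; fin_cases i <;> simp [mulT302]
    have he3 : φ ![0, 0, 1] = ![0, 0, x ^ 3] := by
      have h := hmul ![0, 1, 0] ![1, 0, 0]
      rw [hm2, he2, he1] at h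
      rw [h]
      ext i; fin_cases i <;> simp [mulT302] <;> ring
    refine ⟨x, y, z, ?_, he1, he2, he3⟩
    intro hx0
    have h0 : φ ![0, 1, 0] = φ 0 := by
      rw [he2, hx0, map_zero]; ext i; fin_cases i <;> simp
    have h1 := hbij.1 h0
    have h2 : (![(0:ℂ), 1, 0] : Fin 3 → ℂ) 1 = (0 : Fin 3 → ℂ) 1 := by rw [h1]
    simp at h2
  · rintro ⟨x, y, z, hx, h1, h2, h3⟩
    have hrep : ∀ u : Fin 3 → ℂ,
        u = u 0 • ![1, 0, 0] + u 1 • ![0, 1, 0] + u 2 • ![0, 0, 1] := by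
      intro u; ext i; fin_cases i <;> simp
    have hφ : ∀ u : Fin 3 → ℂ, φ u =
        ![u 0 * x, u 0 * y + u 1 * x ^ 2,
          u 0 * z + u 1 * ((lam + 1) * x * y) + u 2 * x ^ 3] := by
      intro u
      conv_lhs => rw [hrep u]
      rw [map_add, map_add, map_smul, map_smul, map_smul, h1, h2, h3]
      ext i; fin_cases i <;> simp <;> ring
    have hinj : Function.Injective φ := by
      intro u v h
      rw [hφ u, hφ v] at h
      have h0 := congrFun h 0
      have ha := congrFun h 1
      have hb := congrFun h 2
      simp only [Matrix.cons_val_zero, Matrix.cons_val_one, Matrix.head_cons,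
        Matrix.cons_val_two, Matrix.tail_cons] at h0 ha hb
      have e0 : u 0 = v 0 := mul_right_cancel₀ hx h0
      have e1 : u 1 = v 1 := by
        rw [e0] at ha
        have := add_left_cancel ha
        exact mul_right_cancel₀ (pow_ne_zero 2 hx) this
      have e2 : u 2 = v 2 := by
        rw [e0, e1] at hb
        have := add_left_cancel hb
        exact mul_right_cancel₀ (pow_ne_zero 3 hx) this
      ext i; fin_cases i
      · exact e0
      · exact e1
      · exact e2
    refine ⟨⟨hinj, ?_⟩, ?_⟩
    · exact (LinearMap.injective_iff_surjective).mp hinj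
    · intro u v
      rw [hφ, hφ, hφ]
      ext i
      fin_cases i <;> simp [mulT302] <;> ring
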